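/- arXiv:2501.12721 — 3 statements merged into one kernel-verified Lean document; each statement's English description precedes it below -/
import Mathlib

section
/- Let u be smooth, z, r₀ : ℝ, and suppose s solves s'' - u·s = z·s and l solves l''' - 4(u+z)·l' - 2u'·l = 0. Define ψ₃(x,y) = l(x), ψ₂(x,y) = s(x) - (y/2)·l'(x), ψ₁(x,y) = r₀ + (y/2)·(y·l''(x) - 4s'(x) - 2y·l(x)·(u(x)+z)). Then these functions satisfy the four linear PDEs: (ψ₁)_x = -2A₀·ψ₂, (ψ₃)_y = 0, (ψ₁)_y + 2(ψ₂)_x = -2A₀·ψ₃, (ψ₃)_x + 2(ψ₂)_y = 0, where A₀(x,y) = (u(x)+z)·y. -/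
theorem stmt_3 (u s l : ℝ → ℝ) (z r₀ : ℝ)
    (hu : ContDiff ℝ (⊤ : ℕ∞) u) (hs : ContDiff ℝ (⊤ : ℕ∞) s) (hl : ContDiff ℝ (⊤ : ℕ∞) l)
    (hsode : ∀ x, deriv (deriv s) x - u x * s x = z * s x)
    (hlode : ∀ x, deriv (deriv (deriv l)) x - 4 * (u x + z) * deriv l x
                  - 2 * deriv u x * l x = 0)
    (ψ₁ ψ₂ ψ₃ A₀ : ℝ → ℝ → ℝ)
    (hψ₁ : ∀ x y, ψ₁ x y = r₀ + (y / 2) * (y * deriv (deriv l) x - 4 * deriv s x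
                              - 2 * y * l x * (u x + z)))
    (hψ₂ : ∀ x y, ψ₂ x y = s x - (y / 2) * deriv l x)
    (hψ₃ : ∀ x y, ψ₃ x y = l x)
    (hA₀ : ∀ x y, A₀ x y = (u x + z) * y) :
    ∀ x y,
      deriv (fun t => ψ₁ t y) x = -2 * A₀ x y * ψ₂ x y ∧
      deriv (fun t => ψ₃ x t) y = 0 ∧
      deriv (fun t => ψ₁ x t) y + 2 * deriv (fun t => ψ₂ t y) x = -2 * A₀ x y * ψ₃ x y ∧
      deriv (fun t => ψ₃ t y) x + 2 * deriv (fun t => ψ₂ x t) y = 0 := by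
  have hl0 : ContDiff ℝ (⊤ : ℕ∞) l := hl.of_le (by simp)
  have hs0 : ContDiff ℝ (⊤ : ℕ∞) s := hs.of_le (by simp)
  have hu0 : ContDiff ℝ (⊤ : ℕ∞) u := hu.of_le (by simp)
  have hl1 : ContDiff ℝ (⊤ : ℕ∞) (deriv l) := (contDiff_infty_iff_deriv.mp hl0).2
  have hl2 : ContDiff ℝ (⊤ : ℕ∞) (deriv (deriv l)) := (contDiff_infty_iff_deriv.mp hl1).2
  have hs1 : ContDiff ℝ (⊤ : ℕ∞) (deriv s) := (contDiff_infty_iff_deriv.mp hs0).2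
  have dU : ∀ x, HasDerivAt u (deriv u x) x :=
    fun x => ((hu0.differentiable (by simp)) x).hasDerivAt
  have dL : ∀ x, HasDerivAt l (deriv l x) x :=
    fun x => ((hl0.differentiable (by simp)) x).hasDerivAt
  have dL1 : ∀ x, HasDerivAt (deriv l) (deriv (deriv l) x) x :=
    fun x => ((hl1.differentiable (by simp)) x).hasDerivAt
  have dL2 : ∀ x, HasDerivAt (deriv (deriv l)) (deriv (deriv (deriv l)) x) x :=
    fun x => ((hl2.differentiable (by simp)) x).hasDerivAt
  have dS : ∀ x, HasDerivAt s (deriv s x) x :=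
    fun x => ((hs0.differentiable (by simp)) x).hasDerivAt
  have dS1 : ∀ x, HasDerivAt (deriv s) (deriv (deriv s) x) x :=
    fun x => ((hs1.differentiable (by simp)) x).hasDerivAt
  intro x y
  simp only [hψ₁, hψ₂, hψ₃, hA₀]
  have H1 : HasDerivAt
      (fun t => r₀ + (y / 2) * (y * deriv (deriv l) t - 4 * deriv s t
        - 2 * y * l t * (u t + z)))
      ((y / 2) * (y * deriv (deriv (deriv l)) x - 4 * deriv (deriv s) x
        - (2 * y * deriv l x * (u x + z) + 2 * y * l x * deriv u x))) x := by
    have hin : HasDerivAt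
        (fun t => y * deriv (deriv l) t - 4 * deriv s t - 2 * y * l t * (u t + z))
        (y * deriv (deriv (deriv l)) x - 4 * deriv (deriv s) x
          - (2 * y * deriv l x * (u x + z) + 2 * y * l x * deriv u x)) x := by
      have h3 : HasDerivAt (fun t => 2 * y * l t * (u t + z))
          (2 * y * deriv l x * (u x + z) + 2 * y * l x * deriv u x) x := by
        exact (((dL x).const_mul (2 * y)).mul ((dU x).add_const z))
      exact (((dL2 x).const_mul y).sub ((dS1 x).const_mul 4)).sub h3
    exact (hin.const_mul (y / 2)).const_add r₀
  have H2 : HasDerivAt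
      (fun t : ℝ => r₀ + (t / 2) * (t * deriv (deriv l) x - 4 * deriv s x
        - 2 * t * l x * (u x + z)))
      (1 / 2 * (y * deriv (deriv l) x - 4 * deriv s x - 2 * y * l x * (u x + z))
        + y / 2 * (deriv (deriv l) x - 2 * l x * (u x + z))) y := by
    have hid := hasDerivAt_id y
    have hin := (((hid.mul_const (deriv (deriv l) x)).sub_const (4 * deriv s x)).sub
      (((hid.const_mul 2).mul_const (l x)).mul_const (u x + z)))
    have := ((hid.div_const 2).mul hin).const_add r₀
    exact this.congr_deriv (by simp only [id_eq, Pi.sub_apply]; ring)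
  have H3 : HasDerivAt (fun t => s t - y / 2 * deriv l t)
      (deriv s x - y / 2 * deriv (deriv l) x) x :=
    (dS x).sub ((dL1 x).const_mul (y / 2))
  have H4 : HasDerivAt (fun t : ℝ => s x - t / 2 * deriv l x)
      (-(1 / 2 * deriv l x)) y := by
    have := (((hasDerivAt_id y).div_const 2).mul_const (deriv l x)).const_sub (s x)
    exact this
  refine ⟨?_, ?_, ?_, ?_⟩
  · rw [H1.deriv]
    linear_combination (y ^ 2 / 2) * hlode x - 2 * y * hsode x
  · simp
  · rw [H2.deriv, H3.deriv]
    ring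
  · rw [(dL x).deriv, H4.deriv]
    ring
end

section
/- Let u be smooth, z : ℝ, and suppose ψ₃(x,y) = l(x), ψ₂(x,y) = s(x) - (y/2)l'(x), ψ₁(x,y) = r(x) + (y/2)(y·l''(x) - 4s'(x) - 2y·l(x)(u(x)+z)) satisfy (ψ₁)_x = -2(u(x)+z)y·ψ₂ for all x and all y. Then r is constant, s solves s'' - u·s = z·s, and l solves l''' - 4(u+z)l' - 2u'l = 0. -/
theorem stmt_4 (u r s l : ℝ → ℝ) (z : ℝ)
    (hu : ContDiff ℝ (⊤ : ℕ∞) u) (hr : ContDiff ℝ (⊤ : ℕ∞) r) (hs : ContDiff ℝ (⊤ : ℕ∞) s)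
    (hl : ContDiff ℝ (⊤ : ℕ∞) l)
    (hpde : ∀ x y : ℝ,
      deriv (fun t => r t + (y / 2) * (y * deriv (deriv l) t - 4 * deriv s t
               - 2 * y * l t * (u t + z))) x
        = -2 * (u x + z) * y * (s x - (y / 2) * deriv l x)) :
    (∀ x y, r x = r y) ∧
    (∀ x, deriv (deriv s) x - u x * s x = z * s x) ∧
    (∀ x, deriv (deriv (deriv l)) x - 4 * (u x + z) * deriv l x
          - 2 * deriv u x * l x = 0) := by
  have hl' : ContDiff ℝ (⊤ : ℕ∞) l := hl.of_le (by simp)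
  have hs' : ContDiff ℝ (⊤ : ℕ∞) s := hs.of_le (by simp)
  have hl1 : ContDiff ℝ (⊤ : ℕ∞) (deriv l) := (contDiff_infty_iff_deriv.mp hl').2
  have hl2 : ContDiff ℝ (⊤ : ℕ∞) (deriv (deriv l)) := (contDiff_infty_iff_deriv.mp hl1).2
  have hs1 : ContDiff ℝ (⊤ : ℕ∞) (deriv s) := (contDiff_infty_iff_deriv.mp hs').2
  have key : ∀ x y : ℝ,
      deriv r x + (y / 2) * (y * deriv (deriv (deriv l)) x - 4 * deriv (deriv s) x
        - (2 * y * deriv l x * (u x + z) + 2 * y * l x * deriv u x))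
      = -2 * (u x + z) * y * (s x - (y / 2) * deriv l x) := by
    intro x y
    have hr' : HasDerivAt r (deriv r x) x := (hr.differentiable (by simp) x).hasDerivAt
    have h1 : HasDerivAt (fun t => deriv (deriv l) t) (deriv (deriv (deriv l)) x) x :=
      (hl2.differentiable (by simp) x).hasDerivAt
    have h2 : HasDerivAt (fun t => deriv s t) (deriv (deriv s) x) x :=
      (hs1.differentiable (by simp) x).hasDerivAt
    have h3 : HasDerivAt l (deriv l x) x := (hl.differentiable (by simp) x).hasDerivAt
    have h4 : HasDerivAt (fun t => u t + z) (deriv u x) x := by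
      simpa using ((hu.differentiable (by simp) x).hasDerivAt).add_const z
    have hprod : HasDerivAt (fun t => 2 * y * l t * (u t + z))
        (2 * y * deriv l x * (u x + z) + 2 * y * l x * deriv u x) x := by
      have := (h3.const_mul (2 * y)).mul h4
      exact this
    have hfull : HasDerivAt (fun t => r t + (y / 2) * (y * deriv (deriv l) t - 4 * deriv s t
        - 2 * y * l t * (u t + z)))
        (deriv r x + (y / 2) * (y * deriv (deriv (deriv l)) x - 4 * deriv (deriv s) x
          - (2 * y * deriv l x * (u x + z) + 2 * y * l x * deriv u x))) x :=
      hr'.add ((((h1.const_mul y).sub (h2.const_mul 4)).sub hprod).const_mul (y / 2))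
    rw [← hfull.deriv]
    exact hpde x y
  have hr0 : ∀ x : ℝ, deriv r x = 0 := by
    intro x
    have := key x 0
    simpa using this
  refine ⟨?_, ?_, ?_⟩
  · exact fun x y => is_const_of_deriv_eq_zero (hr.differentiable (by simp)) hr0 x y
  · intro x
    have h1 := key x 1
    have h2 := key x (-1)
    rw [hr0 x] at h1 h2
    nlinarith [h1, h2]
  · intro x
    have h1 := key x 1
    have h2 := key x (-1)
    rw [hr0 x] at h1 h2
    nlinarith [h1, h2]
end

section
/- With the metric g₁₁ = (r₀x⁴ - y²(x⁴+x²+1))/(x²y² - r₀x² + r₀)², g₁₂ = -xy/(x²y² - r₀x² + r₀)², g₂₂ = x²(x²-1)/(x²y² - r₀x² + r₀)², the Gaussian curvature is constant and equal to -r₀ at every point where the metric is defined and nondegenerate. -/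
/-!
All three coefficients are polynomials divided by the common factor `D² = (x²y² - r₀x² + r₀)²`, so
every derivative entering the Brioschi formula follows from the quotient rule for `p / qⁿ`; a
second derivative is taken through the closed form of the first one, valid on the neighbourhood
where `D ≠ 0`. Substituting these closed forms turns the claim into a polynomial identity.
-/

open Topology

section QuotientRule

variable {p q p' q' : ℝ → ℝ} {a b t : ℝ}

theorem HasDerivAt.div_pow (hp : HasDerivAt p a t) (hq : HasDerivAt q b t) (ht : q t ≠ 0)
    (n : ℕ) :
    HasDerivAt (fun s => p s / q s ^ n) ((a * q t - n * p t * b) / q t ^ (n + 1)) t := by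
  refine (hp.div (hq.pow n) (pow_ne_zero n ht)).congr_deriv ?_
  simp only [Pi.pow_apply]
  rcases n with _ | n
  · simp [ht]
  · rw [Nat.add_sub_cancel]
    field_simp
    push_cast
    ring

theorem deriv_div_sq_eventuallyEq (hp : ∀ s, HasDerivAt p (p' s) s)
    (hq : ∀ s, HasDerivAt q (q' s) s) (ht : q t ≠ 0) :
    deriv (fun s => p s / q s ^ 2) =ᶠ[𝓝 t]
      fun s => (p' s * q s - 2 * p s * q' s) / q s ^ 3 := by
  filter_upwards [(hq t).continuousAt.eventually_ne ht] with s hs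
  exact ((hp s).div_pow (hq s) hs 2).deriv

theorem deriv_deriv_div_sq (hp : ∀ s, HasDerivAt p (p' s) s)
    (hq : ∀ s, HasDerivAt q (q' s) s) (hp' : HasDerivAt p' a t) (hq' : HasDerivAt q' b t)
    (ht : q t ≠ 0) :
    deriv (deriv fun s => p s / q s ^ 2) t =
      ((a * q t - p' t * q' t - 2 * p t * b) * q t
        - 3 * (p' t * q t - 2 * p t * q' t) * q' t) / q t ^ 4 := by
  rw [(deriv_div_sq_eventuallyEq hp hq ht).deriv_eq]
  have hnum := (hp'.mul (hq t)).sub (((hp t).const_mul 2).mul hq')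
  refine ((hnum.div_pow (hq t) ht 3).congr_deriv ?_).deriv
  simp only [Pi.sub_apply, Pi.mul_apply]
  push_cast
  ring

end QuotientRule

theorem deriv_deriv_div_sq_mixed {p q : ℝ → ℝ → ℝ} {py qy : ℝ → ℝ} {x y px qx pxy qxy : ℝ}
    (hpy : ∀ t, HasDerivAt (p t) (py t) y) (hqy : ∀ t, HasDerivAt (q t) (qy t) y)
    (hpx : HasDerivAt (p · y) px x) (hqx : HasDerivAt (q · y) qx x)
    (hpyx : HasDerivAt py pxy x) (hqyx : HasDerivAt qy qxy x) (hxy : q x y ≠ 0) :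
    deriv (fun t => deriv (fun s => p t s / q t s ^ 2) y) x =
      ((pxy * q x y + py x * qx - 2 * px * qy x - 2 * p x y * qxy) * q x y
        - 3 * (py x * q x y - 2 * p x y * qy x) * qx) / q x y ^ 4 := by
  have hinner : (fun t => deriv (fun s => p t s / q t s ^ 2) y) =ᶠ[𝓝 x]
      fun t => (py t * q t y - 2 * p t y * qy t) / q t y ^ 3 := by
    filter_upwards [hqx.continuousAt.eventually_ne hxy] with t ht
    exact ((hpy t).div_pow (hqy t) ht 2).deriv
  rw [hinner.deriv_eq]
  have hnum := (hpyx.mul hqx).sub ((hpx.const_mul 2).mul hqyx)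
  refine ((hnum.div_pow hqx hxy 3).congr_deriv ?_).deriv
  simp only [Pi.sub_apply, Pi.mul_apply]
  push_cast
  ring

namespace LameMetric

def den (r₀ x y : ℝ) : ℝ := x ^ 2 * y ^ 2 - r₀ * x ^ 2 + r₀

def numE (r₀ x y : ℝ) : ℝ := r₀ * x ^ 4 - y ^ 2 * (x ^ 4 + x ^ 2 + 1)

def numF (x y : ℝ) : ℝ := -(x * y)

def numG (x : ℝ) : ℝ := x ^ 2 * (x ^ 2 - 1)

noncomputable def E (r₀ x y : ℝ) : ℝ := numE r₀ x y / den r₀ x y ^ 2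

noncomputable def F (r₀ x y : ℝ) : ℝ := numF x y / den r₀ x y ^ 2

noncomputable def G (r₀ x y : ℝ) : ℝ := numG x / den r₀ x y ^ 2

variable {r₀ x y : ℝ}

theorem hasDerivAt_den_fst : HasDerivAt (den r₀ · y) (2 * x * (y ^ 2 - r₀)) x :=
  ((((hasDerivAt_pow 2 x).mul_const (y ^ 2)).sub ((hasDerivAt_pow 2 x).const_mul r₀)).add_const
    r₀).congr_deriv (by push_cast; ring)

theorem hasDerivAt_den_snd : HasDerivAt (den r₀ x) (2 * x ^ 2 * y) y :=
  ((((hasDerivAt_pow 2 y).const_mul (x ^ 2)).sub_const (r₀ * x ^ 2)).add_const r₀).congr_deriv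
    (by push_cast; ring)

theorem hasDerivAt_numE_fst :
    HasDerivAt (numE r₀ · y) (4 * r₀ * x ^ 3 - y ^ 2 * (4 * x ^ 3 + 2 * x)) x :=
  (((hasDerivAt_pow 4 x).const_mul r₀).sub
    ((((hasDerivAt_pow 4 x).add (hasDerivAt_pow 2 x)).add_const 1).const_mul (y ^ 2))).congr_deriv
    (by push_cast; ring)

theorem hasDerivAt_numE_snd : HasDerivAt (numE r₀ x) (-2 * y * (x ^ 4 + x ^ 2 + 1)) y :=
  (((hasDerivAt_pow 2 y).mul_const (x ^ 4 + x ^ 2 + 1)).const_sub (r₀ * x ^ 4)).congr_deriv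
    (by push_cast; ring)

theorem hasDerivAt_numF_fst : HasDerivAt (numF · y) (-y) x :=
  ((hasDerivAt_id x).mul_const y).neg.congr_deriv (by simp)

theorem hasDerivAt_numF_snd : HasDerivAt (numF x) (-x) y :=
  ((hasDerivAt_id y).const_mul x).neg.congr_deriv (by simp)

theorem hasDerivAt_numG : HasDerivAt numG (4 * x ^ 3 - 2 * x) x :=
  ((hasDerivAt_pow 2 x).mul ((hasDerivAt_pow 2 x).sub_const 1)).congr_deriv
    (by push_cast; ring)

theorem deriv_E_fst (h : den r₀ x y ≠ 0) : deriv (fun t => E r₀ t y) x =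
    ((4 * r₀ * x ^ 3 - y ^ 2 * (4 * x ^ 3 + 2 * x)) * den r₀ x y
      - 2 * numE r₀ x y * (2 * x * (y ^ 2 - r₀))) / den r₀ x y ^ 3 :=
  (hasDerivAt_numE_fst.div_pow hasDerivAt_den_fst h 2).deriv

theorem deriv_E_snd (h : den r₀ x y ≠ 0) : deriv (fun s => E r₀ x s) y =
    (-2 * y * (x ^ 4 + x ^ 2 + 1) * den r₀ x y - 2 * numE r₀ x y * (2 * x ^ 2 * y))
      / den r₀ x y ^ 3 :=
  (hasDerivAt_numE_snd.div_pow hasDerivAt_den_snd h 2).deriv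

theorem deriv_F_fst (h : den r₀ x y ≠ 0) : deriv (fun t => F r₀ t y) x =
    (-y * den r₀ x y - 2 * numF x y * (2 * x * (y ^ 2 - r₀))) / den r₀ x y ^ 3 :=
  (hasDerivAt_numF_fst.div_pow hasDerivAt_den_fst h 2).deriv

theorem deriv_F_snd (h : den r₀ x y ≠ 0) : deriv (fun s => F r₀ x s) y =
    (-x * den r₀ x y - 2 * numF x y * (2 * x ^ 2 * y)) / den r₀ x y ^ 3 :=
  (hasDerivAt_numF_snd.div_pow hasDerivAt_den_snd h 2).deriv

theorem deriv_G_fst (h : den r₀ x y ≠ 0) : deriv (fun t => G r₀ t y) x =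
    ((4 * x ^ 3 - 2 * x) * den r₀ x y - 2 * numG x * (2 * x * (y ^ 2 - r₀))) / den r₀ x y ^ 3 :=
  (hasDerivAt_numG.div_pow hasDerivAt_den_fst h 2).deriv

theorem deriv_G_snd (h : den r₀ x y ≠ 0) : deriv (fun s => G r₀ x s) y =
    -(2 * numG x * (2 * x ^ 2 * y)) / den r₀ x y ^ 3 :=
  ((hasDerivAt_const y (numG x)).div_pow hasDerivAt_den_snd h 2).deriv.trans (by ring)

theorem deriv_deriv_E_snd (h : den r₀ x y ≠ 0) : deriv (deriv fun s => E r₀ x s) y =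
    ((-2 * (x ^ 4 + x ^ 2 + 1) * den r₀ x y - -2 * y * (x ^ 4 + x ^ 2 + 1) * (2 * x ^ 2 * y)
        - 2 * numE r₀ x y * (2 * x ^ 2)) * den r₀ x y
      - 3 * (-2 * y * (x ^ 4 + x ^ 2 + 1) * den r₀ x y - 2 * numE r₀ x y * (2 * x ^ 2 * y))
        * (2 * x ^ 2 * y)) / den r₀ x y ^ 4 :=
  deriv_deriv_div_sq (fun _ => hasDerivAt_numE_snd) (fun _ => hasDerivAt_den_snd)
    (((hasDerivAt_id y).const_mul (-2)).mul_const _ |>.congr_deriv (by ring))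
    (((hasDerivAt_id y).const_mul (2 * x ^ 2)).congr_deriv (by ring)) h

theorem deriv_deriv_G_fst (h : den r₀ x y ≠ 0) : deriv (deriv fun t => G r₀ t y) x =
    (((12 * x ^ 2 - 2) * den r₀ x y - (4 * x ^ 3 - 2 * x) * (2 * x * (y ^ 2 - r₀))
        - 2 * numG x * (2 * (y ^ 2 - r₀))) * den r₀ x y
      - 3 * ((4 * x ^ 3 - 2 * x) * den r₀ x y - 2 * numG x * (2 * x * (y ^ 2 - r₀)))
        * (2 * x * (y ^ 2 - r₀))) / den r₀ x y ^ 4 :=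
  deriv_deriv_div_sq (fun _ => hasDerivAt_numG) (fun _ => hasDerivAt_den_fst)
    ((((hasDerivAt_pow 3 x).const_mul 4).sub ((hasDerivAt_id x).const_mul 2)).congr_deriv
      (by push_cast; ring))
    (((hasDerivAt_id x).const_mul 2).mul_const _ |>.congr_deriv (by ring)) h

theorem deriv_deriv_F_snd_fst (h : den r₀ x y ≠ 0) :
    deriv (fun t => deriv (fun s => F r₀ t s) y) x =
      ((-1 * den r₀ x y + -x * (2 * x * (y ^ 2 - r₀)) - 2 * -y * (2 * x ^ 2 * y)
          - 2 * numF x y * (4 * x * y)) * den r₀ x y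
        - 3 * (-x * den r₀ x y - 2 * numF x y * (2 * x ^ 2 * y)) * (2 * x * (y ^ 2 - r₀)))
        / den r₀ x y ^ 4 :=
  deriv_deriv_div_sq_mixed (fun _ => hasDerivAt_numF_snd) (fun _ => hasDerivAt_den_snd)
    hasDerivAt_numF_fst hasDerivAt_den_fst ((hasDerivAt_id x).neg)
    ((((hasDerivAt_pow 2 x).const_mul 2).mul_const y).congr_deriv (by push_cast; ring)) h

end LameMetric

theorem stmt_13 (r₀ : ℝ) (E F G : ℝ → ℝ → ℝ)
    (hE : ∀ x y, E x y = (r₀ * x ^ 4 - y ^ 2 * (x ^ 4 + x ^ 2 + 1))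
            / (x ^ 2 * y ^ 2 - r₀ * x ^ 2 + r₀) ^ 2)
    (hF : ∀ x y, F x y = -(x * y) / (x ^ 2 * y ^ 2 - r₀ * x ^ 2 + r₀) ^ 2)
    (hG : ∀ x y, G x y = x ^ 2 * (x ^ 2 - 1)
            / (x ^ 2 * y ^ 2 - r₀ * x ^ 2 + r₀) ^ 2) :
    ∀ x y : ℝ, x ^ 2 * y ^ 2 - r₀ * x ^ 2 + r₀ ≠ 0 →
      E x y * G x y - (F x y) ^ 2 ≠ 0 →
      ( (Matrix.det !![
          -(1/2) * deriv (deriv (fun s => E x s)) y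
            + deriv (fun t => deriv (fun s => F t s) y) x
            - (1/2) * deriv (deriv (fun t => G t y)) x,
          (1/2) * deriv (fun t => E t y) x,
          deriv (fun t => F t y) x - (1/2) * deriv (fun s => E x s) y;
          deriv (fun s => F x s) y - (1/2) * deriv (fun t => G t y) x,
          E x y, F x y;
          (1/2) * deriv (fun s => G x s) y, F x y, G x y]
        - Matrix.det !![
          0, (1/2) * deriv (fun s => E x s) y, (1/2) * deriv (fun t => G t y) x;
          (1/2) * deriv (fun s => E x s) y, E x y, F x y;
          (1/2) * deriv (fun t => G t y) x, F x y, G x y])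
        / (E x y * G x y - (F x y) ^ 2) ^ 2 ) = -r₀ := by
  intro x y hD hdet
  obtain rfl : E = LameMetric.E r₀ := funext₂ hE
  obtain rfl : F = LameMetric.F r₀ := funext₂ hF
  obtain rfl : G = LameMetric.G r₀ := funext₂ hG
  change LameMetric.den r₀ x y ≠ 0 at hD
  rw [LameMetric.deriv_deriv_E_snd hD, LameMetric.deriv_deriv_F_snd_fst hD,
    LameMetric.deriv_deriv_G_fst hD, LameMetric.deriv_E_fst hD, LameMetric.deriv_E_snd hD,
    LameMetric.deriv_F_fst hD, LameMetric.deriv_F_snd hD, LameMetric.deriv_G_fst hD,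
    LameMetric.deriv_G_snd hD,
    Matrix.det_fin_three, Matrix.det_fin_three, div_eq_iff (pow_ne_zero 2 hdet)]
  simp only [Matrix.of_apply, Matrix.cons_val', Matrix.cons_val_zero, Matrix.cons_val_one,
    Matrix.cons_val, Matrix.cons_val_fin_one, LameMetric.E, LameMetric.F, LameMetric.G]
  field_simp
  simp only [LameMetric.den, LameMetric.numE, LameMetric.numF, LameMetric.numG]
  ring
end
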